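/- For all positive reals h, c, k and T, ∫₀^∞ ∂_T B(ν,T) dν = acT³/π, where ∂_T B(ν,T) = (2h²ν⁴/(c²kT²))·exp(hν/(kT))/(exp(hν/(kT))−1)² is the partial derivative of the Planck function with respect to temperature. -/

import Mathlib

open Real MeasureTheory

/-- The radiation constant a = 8π⁵k⁴/(15h³c³). -/
noncomputable def radConst (h c k : ℝ) : ℝ :=
  8 * Real.pi ^ 5 * k ^ 4 / (15 * h ^ 3 * c ^ 3)

/-- The temperature derivative of the Planck function,
    ∂_T B(ν,T) = (2h²ν⁴/(c²kT²))·exp(hν/(kT))/(exp(hν/(kT))−1)². -/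
noncomputable def dTPlanck (h c k ν T : ℝ) : ℝ :=
  (2 * h ^ 2 * ν ^ 4 / (c ^ 2 * k * T ^ 2)) *
    Real.exp (h * ν / (k * T)) / (Real.exp (h * ν / (k * T)) - 1) ^ 2

section Aux
open Set

lemma intA {b : ℝ} (hb : 0 < b) :
    ∫ t in Ioi (0:ℝ), t ^ 4 * Real.exp (-(b * t)) = 24 / b ^ 5 := by
  have h5 : (0:ℝ) < 5 := by norm_num
  have key := integral_rpow_mul_exp_neg_mul_Ioi h5 hb
  rw [show ((5:ℝ) - 1) = ((4:ℕ):ℝ) by norm_num] at key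
  have e : ∫ t in Ioi (0:ℝ), t ^ 4 * Real.exp (-(b * t))
      = ∫ t in Ioi (0:ℝ), t ^ ((4:ℕ):ℝ) * Real.exp (-(b * t)) :=
    setIntegral_congr_fun measurableSet_Ioi (fun t ht => by rw [Real.rpow_natCast])
  rw [e, key, show (5:ℝ) = ((4:ℕ):ℝ) + 1 by norm_num, Real.Gamma_nat_eq_factorial,
    show (((4:ℕ):ℝ)) + 1 = ((5:ℕ):ℝ) by norm_num, Real.rpow_natCast, one_div, inv_pow]
  norm_num [Nat.factorial]
  ring

lemma intB {b : ℝ} (hb : 0 < b) :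
    IntegrableOn (fun t : ℝ => t ^ 4 * Real.exp (-(b * t))) (Ioi 0) := by
  have := integrableOn_rpow_mul_exp_neg_mul_rpow (s := 4) (p := 1) (by norm_num) (by norm_num) hb
  refine this.congr_fun (fun t ht => ?_) measurableSet_Ioi
  dsimp only
  rw [Real.rpow_one, show (4:ℝ) = ((4:ℕ):ℝ) by norm_num, Real.rpow_natCast, neg_mul]

lemma planck_core {a : ℝ} (ha : 0 < a) :
    ∫ ν in Ioi (0:ℝ), ν ^ 4 * Real.exp (a * ν) / (Real.exp (a * ν) - 1) ^ 2
      = 4 * Real.pi ^ 4 / (15 * a ^ 5) := by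
  set F : ℕ → ℝ → ℝ := fun n ν => (n : ℝ) * (ν ^ 4 * Real.exp (-(((n : ℝ) * a) * ν))) with hF
  -- integrability of each F n
  have hFint : ∀ n : ℕ, IntegrableOn (F n) (Ioi 0) := by
    intro n
    rcases Nat.eq_zero_or_pos n with rfl | hn
    · simp [hF]
    · have hna : 0 < (n : ℝ) * a := mul_pos (by exact_mod_cast hn) ha
      exact ((intB hna).const_mul _)
  -- value of each integral
  have hFval : ∀ n : ℕ, ∫ ν in Ioi (0:ℝ), F n ν = 24 / ((n:ℝ) ^ 4 * a ^ 5) := by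
    intro n
    rcases Nat.eq_zero_or_pos n with rfl | hn
    · simp [hF]
    · have hn' : (0:ℝ) < (n:ℝ) := by exact_mod_cast hn
      have hna : 0 < (n : ℝ) * a := mul_pos hn' ha
      simp only [hF]
      rw [MeasureTheory.integral_const_mul, intA hna, mul_pow]
      field_simp
  -- norm integrals equal the integrals (nonneg integrand)
  have hFnorm : ∀ n : ℕ, ∫ ν in Ioi (0:ℝ), ‖F n ν‖ = 24 / ((n:ℝ) ^ 4 * a ^ 5) := by
    intro n
    rw [← hFval n]
    refine setIntegral_congr_fun measurableSet_Ioi (fun ν hν => ?_)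
    have : 0 ≤ F n ν := by positivity
    exact Real.norm_of_nonneg this
  -- summability
  have hsum4 : Summable (fun n : ℕ => (1:ℝ) / (n:ℝ) ^ 4) := hasSum_zeta_four.summable
  have hsummand : (fun n : ℕ => (24:ℝ) / ((n:ℝ) ^ 4 * a ^ 5))
      = fun n : ℕ => (24 / a ^ 5) * ((1:ℝ) / (n:ℝ) ^ 4) := by
    funext n; field_simp
  have hsum : Summable fun n : ℕ => ∫ ν in Ioi (0:ℝ), ‖F n ν‖ := by
    simp_rw [hFnorm, hsummand]
    exact hsum4.mul_left _
  -- pointwise series identity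
  have hpt : ∀ ν ∈ Ioi (0:ℝ), (∑' n : ℕ, F n ν)
      = ν ^ 4 * Real.exp (a * ν) / (Real.exp (a * ν) - 1) ^ 2 := by
    intro ν hν
    have hν' : (0:ℝ) < ν := hν
    have haν : 0 < a * ν := mul_pos ha hν'
    set r : ℝ := Real.exp (-(a * ν)) with hr
    have hr1 : r < 1 := by
      rw [hr, Real.exp_lt_one_iff]; linarith
    have hr0 : 0 < r := Real.exp_pos _
    have hnorm : ‖r‖ < 1 := by rw [Real.norm_eq_abs, abs_of_pos hr0]; exact hr1
    have hgeo : HasSum (fun n : ℕ => (n:ℝ) * r ^ n) (r / (1 - r) ^ 2) :=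
      hasSum_coe_mul_geometric_of_norm_lt_one hnorm
    have hFr : ∀ n : ℕ, F n ν = ν ^ 4 * ((n:ℝ) * r ^ n) := by
      intro n
      rw [hF, hr, ← Real.exp_nat_mul]
      ring_nf
    have hs : HasSum (fun n : ℕ => F n ν) (ν ^ 4 * (r / (1 - r) ^ 2)) := by
      simp_rw [hFr]; exact hgeo.mul_left _
    rw [hs.tsum_eq]
    have hE : Real.exp (a * ν) ≠ 0 := (Real.exp_pos _).ne'
    have hE1 : Real.exp (a * ν) - 1 ≠ 0 := by
      have : 1 < Real.exp (a * ν) := by rw [show (1:ℝ) = Real.exp 0 by simp]; exact Real.exp_lt_exp.2 haν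
      linarith
    have hrE : r = (Real.exp (a * ν))⁻¹ := by rw [hr, Real.exp_neg]
    rw [hrE]
    field_simp
  -- put it together
  calc ∫ ν in Ioi (0:ℝ), ν ^ 4 * Real.exp (a * ν) / (Real.exp (a * ν) - 1) ^ 2
      = ∫ ν in Ioi (0:ℝ), ∑' n : ℕ, F n ν :=
        (setIntegral_congr_fun measurableSet_Ioi (fun ν hν => (hpt ν hν).symm))
    _ = ∑' n : ℕ, ∫ ν in Ioi (0:ℝ), F n ν :=
        (MeasureTheory.integral_tsum_of_summable_integral_norm hFint hsum).symm
    _ = ∑' n : ℕ, (24 / a ^ 5) * ((1:ℝ) / (n:ℝ) ^ 4) := by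
        simp_rw [hFval]; rw [hsummand]
    _ = (24 / a ^ 5) * (Real.pi ^ 4 / 90) := by
        rw [tsum_mul_left, hasSum_zeta_four.tsum_eq]
    _ = 4 * Real.pi ^ 4 / (15 * a ^ 5) := by ring

end Aux

/-- For all positive h, c, k, T: ∫₀^∞ ∂_T B(ν,T) dν = acT³/π. -/
theorem stmt_4 (h c k T : ℝ) (hh : 0 < h) (hc : 0 < c) (hk : 0 < k) (hT : 0 < T) :
    ∫ ν in Set.Ioi (0 : ℝ), dTPlanck h c k ν T
      = radConst h c k * c * T ^ 3 / Real.pi := by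
  set a : ℝ := h / (k * T) with ha_def
  have ha : 0 < a := div_pos hh (mul_pos hk hT)
  have heq : ∀ ν : ℝ, dTPlanck h c k ν T
      = (2 * h ^ 2 / (c ^ 2 * k * T ^ 2)) *
        (ν ^ 4 * Real.exp (a * ν) / (Real.exp (a * ν) - 1) ^ 2) := by
    intro ν
    have harg : h * ν / (k * T) = a * ν := by rw [ha_def]; ring
    rw [dTPlanck, harg]; ring
  simp_rw [heq]
  rw [MeasureTheory.integral_const_mul, planck_core ha, radConst, ha_def]
  have hπ : Real.pi ≠ 0 := Real.pi_ne_zero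
  field_simp
  ring
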